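/- Every positive solution of x_n = (α + Σ_{i=1}^k β_i x_{n-i})/(A + Σ_{j=1}^k B_j x_{n-j}) with α > 0, ΣB_j > 0, A = Σβ_i, 2g | i for all i ∈ I_β and 2g | (j+g) for all j ∈ I_B (g = gcd(I_β ∪ I_B)) converges to a periodic solution of period 2g; i.e., for each residue a mod 2g the subsequence (x_{2gm+a})_m converges. -/

import Mathlib

open Filter Topology

/-!
Fix a residue `a`, put `c = α / ∑ Bⱼ` and read `x` along `a + gℤ`, inverting every other term:
`uₘ = x_{a+gm}` for even `m` and `uₘ = c / x_{a+gm}` for odd `m`. The lags with `βᵢ > 0` are even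
multiples of `g` and those with `Bⱼ > 0` odd ones, so in these variables the recurrence says that
`uₘ` is a weighted mean of the lagged values `u_{m-d}`, `d` running over the active lags divided
by `g` (a set of gcd `1`), with weights that vanish exactly on the inactive lags.

Hence the minimum of `u` over a sliding window of length `k + 1` increases and its maximum
decreases; both converge, `u` stays in a compact subinterval of `(0, ∞)`, and the normalised
weights of the active lags are bounded below. If `u` approaches the limit `μ` of the window minima
along some sequence of times, the mean property forces the same for the values one active lag
earlier, hence for every shift in the additive monoid generated by the lags. By the gcd
condition that monoid contains a whole window, so the window maxima also tend to `μ` and `u → μ`.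
Finally `x_{2gm+a} = u_{2m}`.
-/

section Mediant

variable {ι : Type*} {s : Finset ι} {w y : ι → ℝ}

lemma sum_mul_div_sum_sub (hpos : 0 < ∑ i ∈ s, w i) (m : ℝ) :
    (∑ i ∈ s, w i * y i) / (∑ i ∈ s, w i) - m = (∑ i ∈ s, w i * (y i - m)) / ∑ i ∈ s, w i := by
  simp only [mul_sub, Finset.sum_sub_distrib, ← Finset.sum_mul]
  field_simp

lemma sum_mul_div_sum_le (hw : ∀ i ∈ s, 0 ≤ w i) (hpos : 0 < ∑ i ∈ s, w i) {M : ℝ}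
    (hy : ∀ i ∈ s, 0 < w i → y i ≤ M) : (∑ i ∈ s, w i * y i) / (∑ i ∈ s, w i) ≤ M := by
  rw [div_le_iff₀ hpos, Finset.mul_sum]
  refine Finset.sum_le_sum fun i hi => ?_
  rcases (hw i hi).eq_or_lt with h | h
  · simp [← h]
  · rw [mul_comm M]; exact mul_le_mul_of_nonneg_left (hy i hi h) h.le

lemma mul_sub_le_sum_mul_div_sum_sub (hw : ∀ i ∈ s, 0 ≤ w i) (hpos : 0 < ∑ i ∈ s, w i) {m : ℝ}
    (hy : ∀ i ∈ s, 0 < w i → m ≤ y i) {i : ι} (hi : i ∈ s) :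
    w i / (∑ j ∈ s, w j) * (y i - m) ≤ (∑ j ∈ s, w j * y j) / (∑ j ∈ s, w j) - m := by
  have hterm : ∀ j ∈ s, 0 ≤ w j * (y j - m) := fun j hj => by
    rcases (hw j hj).eq_or_lt with h | h
    · simp [← h]
    · exact mul_nonneg h.le (sub_nonneg.2 (hy j hj h))
  rw [sum_mul_div_sum_sub hpos, div_mul_eq_mul_div]
  exact div_le_div_of_nonneg_right (Finset.single_le_sum hterm hi) hpos.le

lemma le_sum_mul_div_sum (hw : ∀ i ∈ s, 0 ≤ w i) (hpos : 0 < ∑ i ∈ s, w i) {m : ℝ}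
    (hy : ∀ i ∈ s, 0 < w i → m ≤ y i) : m ≤ (∑ i ∈ s, w i * y i) / (∑ i ∈ s, w i) := by
  rw [le_div_iff₀ hpos, Finset.mul_sum]
  refine Finset.sum_le_sum fun i hi => ?_
  rcases (hw i hi).eq_or_lt with h | h
  · simp [← h]
  · rw [mul_comm m]; exact mul_le_mul_of_nonneg_left (hy i hi h) h.le

lemma mul_div_sum_le_div_sum {b : ι → ℝ} {p P : ℝ} (hp : 0 < p) (hb : ∀ i ∈ s, 0 ≤ b i)
    (hbs : 0 < ∑ i ∈ s, b i) (hw : ∀ i ∈ s, p * b i ≤ w i ∧ w i ≤ P * b i) {i : ι} (hi : i ∈ s) :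
    p / P * (b i / ∑ j ∈ s, b j) ≤ w i / ∑ j ∈ s, w j := by
  have hlow : p * ∑ j ∈ s, b j ≤ ∑ j ∈ s, w j := by
    rw [Finset.mul_sum]; exact Finset.sum_le_sum fun j hj => (hw j hj).1
  have hup : ∑ j ∈ s, w j ≤ P * ∑ j ∈ s, b j := by
    rw [Finset.mul_sum]; exact Finset.sum_le_sum fun j hj => (hw j hj).2
  have hws : 0 < ∑ j ∈ s, w j := (mul_pos hp hbs).trans_le hlow
  have hP : 0 < P := pos_of_mul_pos_left (hws.trans_le hup) hbs.le
  rw [div_mul_div_comm, div_le_div_iff₀ (mul_pos hP hbs) hws]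
  exact mul_le_mul (hw i hi).1 hup hws.le ((mul_nonneg hp.le (hb i hi)).trans (hw i hi).1)

lemma mul_add_mul_mem_Icc {β B s t p P : ℝ} (hβ : 0 ≤ β) (hB : 0 ≤ B) (hs : s ∈ Set.Icc p P)
    (ht : t ∈ Set.Icc p P) : p * (β + B) ≤ β * s + B * t ∧ β * s + B * t ≤ P * (β + B) :=
  ⟨by nlinarith [hs.1, ht.1], by nlinarith [hs.2, ht.2]⟩

end Mediant

lemma tendsto_atTop_sub_const_right {α : Type*} (l : Filter α) (C : ℤ) {f : α → ℤ}
    (hf : Tendsto f l atTop) : Tendsto (fun x => f x - C) l atTop := by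
  simpa [sub_eq_add_neg] using tendsto_atTop_add_const_right l (-C) hf

lemma eventually_one_le_add_mul {g : ℕ} (hg : 0 < g) (a : ℤ) :
    ∀ᶠ m : ℤ in atTop, 1 ≤ a + g * m := by
  filter_upwards [eventually_ge_atTop (max (1 - a) 0)] with m hm
  have h1 : (1 : ℤ) ≤ g := by exact_mod_cast hg
  nlinarith [le_max_left (1 - a) 0, le_max_right (1 - a) 0]

lemma monotoneOn_Ici_of_le_add_one {α : Type*} [Preorder α] {f : ℤ → α} {N : ℤ}
    (hf : ∀ n ≥ N, f n ≤ f (n + 1)) : MonotoneOn f (Set.Ici N) :=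
  monotoneOn_of_le_succ Set.ordConnected_Ici fun n _ hn _ => by
    simpa [Order.succ_eq_add_one] using hf n hn

lemma antitoneOn_Ici_of_add_one_le {α : Type*} [Preorder α] {f : ℤ → α} {N : ℤ}
    (hf : ∀ n ≥ N, f (n + 1) ≤ f n) : AntitoneOn f (Set.Ici N) :=
  antitoneOn_of_succ_le Set.ordConnected_Ici fun n _ hn _ => by
    simpa [Order.succ_eq_add_one] using hf n hn

lemma exists_tendsto_of_monotoneOn_Ici {f : ℤ → ℝ} {N : ℤ} (hf : MonotoneOn f (Set.Ici N))
    (hb : BddAbove (f '' Set.Ici N)) : ∃ L, Tendsto f atTop (𝓝 L) := by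
  have hmono : Monotone fun n => f (max n N) := fun a b hab =>
    hf (le_max_right a N) (le_max_right b N) (max_le_max_right N hab)
  have hbdd : BddAbove (Set.range fun n => f (max n N)) :=
    hb.mono (Set.range_subset_iff.2 fun n => Set.mem_image_of_mem f (le_max_right n N))
  refine ⟨_, (tendsto_atTop_ciSup hmono hbdd).congr' ?_⟩
  filter_upwards [eventually_ge_atTop N] with n hn
  rw [max_eq_left hn]

lemma exists_tendsto_of_antitoneOn_Ici {f : ℤ → ℝ} {N : ℤ} (hf : AntitoneOn f (Set.Ici N))
    (hb : BddBelow (f '' Set.Ici N)) : ∃ L, Tendsto f atTop (𝓝 L) := by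
  have hanti : Antitone fun n => f (max n N) := fun a b hab =>
    hf (le_max_right a N) (le_max_right b N) (max_le_max_right N hab)
  have hbdd : BddBelow (Set.range fun n => f (max n N)) :=
    hb.mono (Set.range_subset_iff.2 fun n => Set.mem_image_of_mem f (le_max_right n N))
  refine ⟨_, (tendsto_atTop_ciInf hanti hbdd).congr' ?_⟩
  filter_upwards [eventually_ge_atTop N] with n hn
  rw [max_eq_left hn]

section Window

variable {u : ℤ → ℝ} {k : ℕ}

variable (u k) in
def windowMin (n : ℤ) : ℝ :=
  (Finset.range (k + 1)).inf' Finset.nonempty_range_add_one fun r => u (n - r)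

variable (u k) in
def windowMax (n : ℤ) : ℝ :=
  (Finset.range (k + 1)).sup' Finset.nonempty_range_add_one fun r => u (n - r)

lemma windowMin_le {r : ℕ} (hr : r ≤ k) (n : ℤ) : windowMin u k n ≤ u (n - r) :=
  Finset.inf'_le _ (Finset.mem_range_succ_iff.2 hr)

lemma le_windowMax {r : ℕ} (hr : r ≤ k) (n : ℤ) : u (n - r) ≤ windowMax u k n :=
  Finset.le_sup' (fun r : ℕ => u (n - r)) (Finset.mem_range_succ_iff.2 hr)

lemma windowMin_le_windowMax (n : ℤ) : windowMin u k n ≤ windowMax u k n :=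
  (windowMin_le k.zero_le n).trans (le_windowMax k.zero_le n)

lemma windowMin_sub_one_le {d : ℕ} (hd : d ∈ Set.Icc 1 k) (n : ℤ) :
    windowMin u k (n - 1) ≤ u (n - d) := by
  have h := windowMin_le (u := u) (k := k) (r := d - 1) ((Nat.sub_le d 1).trans hd.2) (n - 1)
  rwa [Nat.cast_sub hd.1, Nat.cast_one, sub_sub_sub_cancel_right] at h

lemma le_windowMax_sub_one {d : ℕ} (hd : d ∈ Set.Icc 1 k) (n : ℤ) :
    u (n - d) ≤ windowMax u k (n - 1) := by
  have h := le_windowMax (u := u) (k := k) (r := d - 1) ((Nat.sub_le d 1).trans hd.2) (n - 1)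
  rwa [Nat.cast_sub hd.1, Nat.cast_one, sub_sub_sub_cancel_right] at h

lemma windowMin_le_windowMin_add_one {n : ℤ} (h : windowMin u k n ≤ u (n + 1)) :
    windowMin u k n ≤ windowMin u k (n + 1) := by
  refine Finset.le_inf' _ _ fun r hr => ?_
  rcases r with _ | r
  · simpa using h
  · rw [show n + 1 - ((r + 1 : ℕ) : ℤ) = n - r by push_cast; ring]
    exact windowMin_le (u := u) (k := k) (r := r) (by simp at hr; omega) n

lemma windowMax_add_one_le {n : ℤ} (h : u (n + 1) ≤ windowMax u k n) :
    windowMax u k (n + 1) ≤ windowMax u k n := by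
  refine Finset.sup'_le _ _ fun r hr => ?_
  rcases r with _ | r
  · simpa using h
  · rw [show n + 1 - ((r + 1 : ℕ) : ℤ) = n - r by push_cast; ring]
    exact le_windowMax (u := u) (k := k) (r := r) (by simp at hr; omega) n

end Window

section WindowDynamics

variable {u : ℤ → ℝ} {k : ℕ} {N : ℤ}

lemma monotoneOn_windowMin (hlo : ∀ n ≥ N, windowMin u k (n - 1) ≤ u n) :
    MonotoneOn (windowMin u k) (Set.Ici (N - 1)) :=
  monotoneOn_Ici_of_le_add_one fun n hn =>
    windowMin_le_windowMin_add_one (by simpa using hlo (n + 1) (by omega))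

lemma antitoneOn_windowMax (hhi : ∀ n ≥ N, u n ≤ windowMax u k (n - 1)) :
    AntitoneOn (windowMax u k) (Set.Ici (N - 1)) :=
  antitoneOn_Ici_of_add_one_le fun n hn =>
    windowMax_add_one_le (by simpa using hhi (n + 1) (by omega))

lemma mem_Icc_windowMin_windowMax (hlo : ∀ n ≥ N, windowMin u k (n - 1) ≤ u n)
    (hhi : ∀ n ≥ N, u n ≤ windowMax u k (n - 1)) {n : ℤ} (hn : N ≤ n) :
    u n ∈ Set.Icc (windowMin u k (N - 1)) (windowMax u k (N - 1)) := by
  have hn' : n - 1 ∈ Set.Ici (N - 1) := by simp [hn]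
  exact ⟨(monotoneOn_windowMin hlo Set.self_mem_Ici hn' (by omega)).trans (hlo n hn),
    (hhi n hn).trans (antitoneOn_windowMax hhi Set.self_mem_Ici hn' (by omega))⟩

lemma exists_tendsto_windowMin (hlo : ∀ n ≥ N, windowMin u k (n - 1) ≤ u n)
    (hhi : ∀ n ≥ N, u n ≤ windowMax u k (n - 1)) :
    ∃ L, Tendsto (windowMin u k) atTop (𝓝 L) :=
  exists_tendsto_of_monotoneOn_Ici (monotoneOn_windowMin hlo) ⟨windowMax u k (N - 1), by
    rintro _ ⟨n, hn, rfl⟩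
    exact (windowMin_le_windowMax n).trans (antitoneOn_windowMax hhi Set.self_mem_Ici hn hn)⟩

lemma exists_tendsto_windowMax (hlo : ∀ n ≥ N, windowMin u k (n - 1) ≤ u n)
    (hhi : ∀ n ≥ N, u n ≤ windowMax u k (n - 1)) :
    ∃ L, Tendsto (windowMax u k) atTop (𝓝 L) :=
  exists_tendsto_of_antitoneOn_Ici (antitoneOn_windowMax hhi) ⟨windowMin u k (N - 1), by
    rintro _ ⟨n, hn, rfl⟩
    exact (monotoneOn_windowMin hlo Set.self_mem_Ici hn hn).trans (windowMin_le_windowMax n)⟩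

end WindowDynamics

section LagMean

variable {u : ℤ → ℝ} {k : ℕ} {D : Set ℕ} {L : ℝ}

lemma tendsto_comp_sub_of_mem {α : Type*} {l : Filter α} {ψ : α → ℤ} {θ : ℝ} {d : ℕ}
    (hD : D ⊆ Set.Icc 1 k) (hd : d ∈ D) (hθ : 0 < θ)
    (hstrict : ∀ᶠ n in atTop, ∀ m, (∀ e ∈ D, m ≤ u (n - e)) → θ * (u (n - d) - m) ≤ u n - m)
    (hmin : Tendsto (windowMin u k) atTop (𝓝 L)) (hψ : Tendsto ψ l atTop)
    (huψ : Tendsto (u ∘ ψ) l (𝓝 L)) : Tendsto (fun t => u (ψ t - d)) l (𝓝 L) := by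
  have hlo : Tendsto (fun t => windowMin u k (ψ t - 1)) l (𝓝 L) :=
    hmin.comp (tendsto_atTop_sub_const_right _ 1 hψ)
  have hgap : Tendsto (fun t => (u (ψ t) - windowMin u k (ψ t - 1)) / θ) l (𝓝 0) := by
    simpa using (huψ.sub hlo).div_const θ
  have hclose : Tendsto (fun t => u (ψ t - d) - windowMin u k (ψ t - 1)) l (𝓝 0) := by
    refine tendsto_of_tendsto_of_tendsto_of_le_of_le' tendsto_const_nhds hgap
      (Eventually.of_forall fun t => sub_nonneg.2 (windowMin_sub_one_le (hD hd) (ψ t))) ?_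
    filter_upwards [hψ.eventually hstrict] with t ht
    rw [le_div_iff₀ hθ, mul_comm]
    exact ht _ fun e he => windowMin_sub_one_le (hD he) (ψ t)
  simpa using hclose.add hlo

lemma tendsto_comp_sub_of_mem_closure {α : Type*} {l : Filter α} (hD : D ⊆ Set.Icc 1 k)
    (hstrict : ∀ d ∈ D, ∃ θ > 0, ∀ᶠ n in atTop,
      ∀ m, (∀ e ∈ D, m ≤ u (n - e)) → θ * (u (n - d) - m) ≤ u n - m)
    (hmin : Tendsto (windowMin u k) atTop (𝓝 L)) {r : ℕ} (hr : r ∈ AddSubmonoid.closure D) :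
    ∀ {ψ : α → ℤ}, Tendsto ψ l atTop → Tendsto (u ∘ ψ) l (𝓝 L) →
      Tendsto (fun t => u (ψ t - r)) l (𝓝 L) := by
  induction hr using AddSubmonoid.closure_induction with
  | mem d hd =>
    intro ψ hψ huψ
    obtain ⟨θ, hθ, h⟩ := hstrict d hd
    exact tendsto_comp_sub_of_mem hD hd hθ h hmin hψ huψ
  | zero =>
    intro ψ _ huψ
    simp only [Nat.cast_zero, sub_zero]
    exact huψ
  | add r s _ _ ihr ihs =>
    intro ψ hψ huψ
    simpa [sub_sub] using ihs (tendsto_atTop_sub_const_right _ r hψ) (ihr hψ huψ)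

lemma exists_tendsto_comp_of_tendsto_windowMin (h : Tendsto (windowMin u k) atTop (𝓝 L)) :
    ∃ ψ : ℤ → ℤ, Tendsto ψ atTop atTop ∧ Tendsto (u ∘ ψ) atTop (𝓝 L) := by
  choose r hr heq using fun n : ℤ =>
    Finset.exists_mem_eq_inf' Finset.nonempty_range_add_one fun r : ℕ => u (n - r)
  refine ⟨fun n => n - r n, tendsto_atTop_mono (fun n => ?_)
    (tendsto_atTop_sub_const_right _ k tendsto_id), h.congr fun n => heq n⟩
  have := Finset.mem_range_succ_iff.1 (hr n)
  simp only [id]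
  omega

lemma eventually_windowMin_le_and_le_windowMax (hD : D ⊆ Set.Icc 1 k)
    (hlo : ∀ᶠ n in atTop, ∀ m, (∀ d ∈ D, m ≤ u (n - d)) → m ≤ u n)
    (hhi : ∀ᶠ n in atTop, ∀ M, (∀ d ∈ D, u (n - d) ≤ M) → u n ≤ M) :
    ∀ᶠ n in atTop, windowMin u k (n - 1) ≤ u n ∧ u n ≤ windowMax u k (n - 1) :=
  (hlo.and hhi).mono fun n h => ⟨h.1 _ fun _ hd => windowMin_sub_one_le (hD hd) n,
    h.2 _ fun _ hd => le_windowMax_sub_one (hD hd) n⟩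

theorem exists_tendsto_of_lag_mean (hD : D ⊆ Set.Icc 1 k) (hgcd : Nat.setGcd D = 1)
    (hlo : ∀ᶠ n in atTop, ∀ m, (∀ d ∈ D, m ≤ u (n - d)) → m ≤ u n)
    (hhi : ∀ᶠ n in atTop, ∀ M, (∀ d ∈ D, u (n - d) ≤ M) → u n ≤ M)
    (hstrict : ∀ d ∈ D, ∃ θ > 0, ∀ᶠ n in atTop,
      ∀ m, (∀ e ∈ D, m ≤ u (n - e)) → θ * (u (n - d) - m) ≤ u n - m) :
    ∃ L, Tendsto u atTop (𝓝 L) := by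
  obtain ⟨N, hN⟩ := eventually_atTop.1 (eventually_windowMin_le_and_le_windowMax hD hlo hhi)
  obtain ⟨L, hL⟩ := exists_tendsto_windowMin (fun n hn => (hN n hn).1) (fun n hn => (hN n hn).2)
  obtain ⟨L', hL'⟩ := exists_tendsto_windowMax (fun n hn => (hN n hn).1) (fun n hn => (hN n hn).2)
  obtain ⟨ψ, hψ, huψ⟩ := exists_tendsto_comp_of_tendsto_windowMin hL
  obtain ⟨K, hK⟩ := Nat.exists_mem_closure_of_ge D
  have hmax : Tendsto (fun n => windowMax u k (ψ n - K)) atTop (𝓝 L) := by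
    have := Tendsto.finset_sup'_nhds_apply (Finset.nonempty_range_add_one (n := k)) fun r _ =>
      tendsto_comp_sub_of_mem_closure hD hstrict hL (hK (K + r) (by omega) (by simp [hgcd])) hψ huψ
    simpa [windowMax, sub_sub] using this
  rw [tendsto_nhds_unique (hL'.comp (tendsto_atTop_sub_const_right _ K hψ)) hmax] at hL'
  have hshift := tendsto_atTop_sub_const_right _ 1 tendsto_id
  refine ⟨L, tendsto_of_tendsto_of_tendsto_of_le_of_le' (hL.comp hshift) (hL'.comp hshift) ?_ ?_⟩
  · filter_upwards [eventually_ge_atTop N] with n hn using (hN n hn).1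
  · filter_upwards [eventually_ge_atTop N] with n hn using (hN n hn).2

end LagMean

structure IsPosSolution (k : ℕ) (α A : ℝ) (β B : ℕ → ℝ) (x : ℤ → ℝ) : Prop where
  α_pos : 0 < α
  β_nonneg : ∀ i, 0 ≤ β i
  B_nonneg : ∀ j, 0 ≤ B j
  sum_B_pos : 0 < ∑ j ∈ Finset.Icc 1 k, B j
  A_eq : A = ∑ i ∈ Finset.Icc 1 k, β i
  pos : ∀ n, 0 < x n
  eq_div : ∀ n : ℤ, 1 ≤ n → x n =
    (α + ∑ i ∈ Finset.Icc 1 k, β i * x (n - i)) / (A + ∑ j ∈ Finset.Icc 1 k, B j * x (n - j))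

noncomputable def activeLags (k : ℕ) (β B : ℕ → ℝ) : Finset ℕ :=
  (Finset.Icc 1 k).filter fun i => 0 < β i ∨ 0 < B i

def lagSet (k g : ℕ) (β B : ℕ → ℝ) : Set ℕ := {d | g * d ∈ activeLags k β B}

def IsParityLag (β B : ℕ → ℝ) (g l : ℕ) : Prop :=
  β l = 0 ∧ B l = 0 ∨ (∃ d, l = g * d ∧ Even d ∧ B l = 0) ∨ ∃ d, l = g * d ∧ Odd d ∧ β l = 0

noncomputable def twistedSeq (x : ℤ → ℝ) (c : ℝ) (a : ℤ) (g : ℕ) (m : ℤ) : ℝ :=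
  if Even m then x (a + g * m) else c / x (a + g * m)

def twistedWeight (β B : ℕ → ℝ) (x : ℤ → ℝ) (c : ℝ) (a : ℤ) (g : ℕ) (m : ℤ) (l : ℕ) : ℝ :=
  if Even m then β l + B l * x (a + g * m - l) else β l * x (a + g * m - l) + B l * c

section Parity

variable {β B : ℕ → ℝ} {g l : ℕ}

lemma exists_eq_mul_odd_of_two_mul_dvd_add (hl : 1 ≤ l) (h : 2 * g ∣ l + g) :
    ∃ d, l = g * d ∧ Odd d := by
  obtain ⟨e, he⟩ := h
  rcases e with _ | e
  · omega
  · exact ⟨2 * e + 1, by linarith, odd_two_mul_add_one e⟩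

lemma isParityLag_of_dvd (hβ : 0 ≤ β l) (hB : 0 ≤ B l) (hl : 1 ≤ l)
    (hdβ : 0 < β l → 2 * g ∣ l) (hdB : 0 < B l → 2 * g ∣ l + g) : IsParityLag β B g l := by
  rcases hβ.eq_or_lt with hβ0 | hβpos
  · rcases hB.eq_or_lt with hB0 | hBpos
    · exact .inl ⟨hβ0.symm, hB0.symm⟩
    · obtain ⟨d, hd, hodd⟩ := exists_eq_mul_odd_of_two_mul_dvd_add hl (hdB hBpos)
      exact .inr (.inr ⟨d, hd, hodd, hβ0.symm⟩)
  · obtain ⟨e, he⟩ := hdβ hβpos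
    refine .inr (.inl ⟨2 * e, by rw [he]; ring, even_two_mul e, ?_⟩)
    refine hB.eq_or_lt.elim Eq.symm fun hBpos => ?_
    have hgg : 2 * g ∣ g := (Nat.dvd_add_right (hdβ hβpos)).1 (hdB hBpos)
    have hg0 : g = 0 := by
      by_contra hg0
      exact absurd (Nat.le_of_dvd (Nat.pos_of_ne_zero hg0) hgg) (by omega)
    subst hg0
    omega

lemma IsParityLag.exists_eq_mul (hl : IsParityLag β B g l) (hact : 0 < β l ∨ 0 < B l) :
    ∃ d, l = g * d := by
  rcases hl with ⟨h1, h2⟩ | ⟨d, hd, -⟩ | ⟨d, hd, -⟩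
  · simp [h1, h2] at hact
  · exact ⟨d, hd⟩
  · exact ⟨d, hd⟩

end Parity

section LagSet

variable {k g : ℕ} {β B : ℕ → ℝ}

lemma lagSet_subset (hg : 0 < g) : lagSet k g β B ⊆ Set.Icc 1 k := fun d hd => by
  obtain ⟨h1, h2⟩ :=
    Finset.mem_Icc.1 (Finset.mem_filter.1 (show g * d ∈ activeLags k β B from hd)).1
  exact ⟨Nat.pos_of_ne_zero (by rintro rfl; simp at h1), (Nat.le_mul_of_pos_left d hg).trans h2⟩

lemma exists_mem_lagSet (hlag : ∀ l ∈ Finset.Icc 1 k, IsParityLag β B g l) {l : ℕ}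
    (hl : l ∈ activeLags k β B) : ∃ d ∈ lagSet k g β B, l = g * d := by
  obtain ⟨hlk, hact⟩ := Finset.mem_filter.1 hl
  obtain ⟨d, rfl⟩ := (hlag l hlk).exists_eq_mul hact
  exact ⟨d, hl, rfl⟩

lemma setGcd_lagSet (hgcd : g = (activeLags k β B).gcd id) (hg : 0 < g)
    (hlag : ∀ l ∈ Finset.Icc 1 k, IsParityLag β B g l) : Nat.setGcd (lagSet k g β B) = 1 := by
  have hdvd : g * Nat.setGcd (lagSet k g β B) ∣ g * 1 := by
    conv_rhs => rw [mul_one, hgcd]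
    refine Finset.dvd_gcd fun l hl => ?_
    obtain ⟨d, hd, rfl⟩ := exists_mem_lagSet hlag hl
    exact mul_dvd_mul_left g (Nat.setGcd_dvd_of_mem hd)
  exact Nat.dvd_one.1 (Nat.dvd_of_mul_dvd_mul_left hg hdvd)

end LagSet

namespace IsPosSolution

variable {k : ℕ} {α A c : ℝ} {β B : ℕ → ℝ} {x : ℤ → ℝ} {a : ℤ} {g : ℕ}

lemma c_pos (hx : IsPosSolution k α A β B x) (hc : c * ∑ j ∈ Finset.Icc 1 k, B j = α) : 0 < c :=
  pos_of_mul_pos_left (hc ▸ hx.α_pos) hx.sum_B_pos.le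

lemma exists_B_pos (hx : IsPosSolution k α A β B x) : ∃ j ∈ Finset.Icc 1 k, 0 < B j := by
  obtain ⟨j, hj, hBj⟩ := Finset.exists_ne_zero_of_sum_ne_zero hx.sum_B_pos.ne'
  exact ⟨j, hj, (hx.B_nonneg j).lt_of_ne' hBj⟩

lemma gcd_activeLags_pos (hx : IsPosSolution k α A β B x) : 0 < (activeLags k β B).gcd id := by
  obtain ⟨j, hj, hBj⟩ := hx.exists_B_pos
  refine Nat.pos_of_ne_zero fun h => ?_
  have := Finset.gcd_eq_zero_iff.1 h j (Finset.mem_filter.2 ⟨hj, .inr hBj⟩)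
  simp only [id] at this
  simp [this] at hj

lemma eq_sum_div_sum (hx : IsPosSolution k α A β B x) (hc : c * ∑ j ∈ Finset.Icc 1 k, B j = α)
    {n : ℤ} (hn : 1 ≤ n) : x n = (∑ l ∈ Finset.Icc 1 k, (β l * x (n - l) + B l * c)) /
      ∑ l ∈ Finset.Icc 1 k, (β l + B l * x (n - l)) := by
  rw [hx.eq_div n hn, ← hc, hx.A_eq, Finset.sum_add_distrib, Finset.sum_add_distrib,
    ← Finset.sum_mul]
  ring

lemma twistedSeq_pos (hx : IsPosSolution k α A β B x) (hc : 0 < c) (m : ℤ) :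
    0 < twistedSeq x c a g m := by
  unfold twistedSeq
  split_ifs
  exacts [hx.pos _, div_pos hc (hx.pos _)]

lemma twistedWeight_nonneg (hx : IsPosSolution k α A β B x) (hc : 0 < c) (m : ℤ) (l : ℕ) :
    0 ≤ twistedWeight β B x c a g m l := by
  have := hx.β_nonneg l
  have := hx.B_nonneg l
  have := hx.pos (a + g * m - l)
  unfold twistedWeight
  split_ifs <;> positivity

lemma sum_twistedWeight_pos (hx : IsPosSolution k α A β B x) (hc : 0 < c) (m : ℤ) :
    0 < ∑ l ∈ Finset.Icc 1 k, twistedWeight β B x c a g m l := by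
  obtain ⟨j, hj, hBj⟩ := hx.exists_B_pos
  refine Finset.sum_pos' (fun l _ => hx.twistedWeight_nonneg hc m l) ⟨j, hj, ?_⟩
  have := hx.β_nonneg j
  have := hx.pos (a + g * m - j)
  unfold twistedWeight
  split_ifs <;> positivity

lemma eq_zero_of_not_mem_activeLags (hx : IsPosSolution k α A β B x) {l : ℕ}
    (hl : l ∈ Finset.Icc 1 k) (hact : l ∉ activeLags k β B) : β l = 0 ∧ B l = 0 := by
  simp only [activeLags, Finset.mem_filter, hl, true_and, not_or, not_lt] at hact
  exact ⟨le_antisymm hact.1 (hx.β_nonneg l), le_antisymm hact.2 (hx.B_nonneg l)⟩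

lemma twistedWeight_mul_twistedSeq (hx : IsPosSolution k α A β B x) (hg : 0 < g) {l : ℕ}
    (hl : IsParityLag β B g l) (m : ℤ) :
    twistedWeight β B x c a g m l * twistedSeq x c a g (m - (l / g : ℕ)) =
      if Even m then β l * x (a + g * m - l) + B l * c
      else c * (β l + B l * x (a + g * m - l)) := by
  rcases hl with ⟨hβ, hB⟩ | ⟨d, rfl, hd, hB⟩ | ⟨d, rfl, hd, hβ⟩
  · simp [twistedWeight, hβ, hB]
  all_goals
    have hlag : a + g * (m - d) = a + g * m - (g * d : ℕ) := by push_cast; ring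
    have hne := (hx.pos (a + g * m - (g * d : ℕ))).ne'
    rw [Nat.mul_div_cancel_left d hg]
  · have hpar : Even (m - d) ↔ Even m := by simp [Int.even_sub, hd]
    simp only [twistedWeight, twistedSeq, hpar, hlag, hB, zero_mul, add_zero]
    split_ifs
    · rfl
    · field_simp
  · have hpar : Even (m - d) ↔ ¬Even m := by simp [Int.even_sub, Nat.not_even_iff_odd.2 hd]
    simp only [twistedWeight, twistedSeq, hpar, hlag, hβ, zero_mul, zero_add]
    split_ifs
    · field_simp
    · ring

lemma twistedSeq_eq_mean (hx : IsPosSolution k α A β B x) (hc : c * ∑ j ∈ Finset.Icc 1 k, B j = α)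
    (hg : 0 < g) (hlag : ∀ l ∈ Finset.Icc 1 k, IsParityLag β B g l) {m : ℤ} (hm : 1 ≤ a + g * m) :
    twistedSeq x c a g m =
      (∑ l ∈ Finset.Icc 1 k, twistedWeight β B x c a g m l * twistedSeq x c a g (m - (l / g : ℕ))) /
        ∑ l ∈ Finset.Icc 1 k, twistedWeight β B x c a g m l := by
  rw [Finset.sum_congr rfl fun l hl => hx.twistedWeight_mul_twistedSeq hg (hlag l hl) m]
  by_cases he : Even m
  · simp only [twistedSeq, twistedWeight, he, if_true]
    exact hx.eq_sum_div_sum hc hm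
  · simp only [twistedSeq, twistedWeight, he, if_false, ← Finset.mul_sum]
    rw [hx.eq_sum_div_sum hc hm, div_div_eq_mul_div]

lemma x_mem_Icc_of_twistedSeq_mem (hx : IsPosSolution k α A β B x) {m : ℤ}
    {lo hi : ℝ} (hlo : 0 < lo) (h : twistedSeq x c a g m ∈ Set.Icc lo hi) :
    x (a + g * m) ∈ Set.Icc (min lo (c / hi)) (max hi (c / lo)) := by
  have hxm := hx.pos (a + g * m)
  unfold twistedSeq at h
  split_ifs at h
  · exact ⟨min_le_of_left_le h.1, le_max_of_le_left h.2⟩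
  · have hhi : 0 < hi := hlo.trans_le (h.1.trans h.2)
    refine ⟨min_le_of_right_le ?_, le_max_of_le_right ?_⟩
    · rw [div_le_iff₀ hhi, mul_comm]; exact (div_le_iff₀ hxm).1 h.2
    · rw [le_div_iff₀ hlo, mul_comm]; exact (le_div_iff₀ hxm).1 h.1

lemma div_mem_lagSet_of_twistedWeight_pos (hx : IsPosSolution k α A β B x) (hg : 0 < g)
    (hlag : ∀ l ∈ Finset.Icc 1 k, IsParityLag β B g l) {m : ℤ} {l : ℕ} (hl : l ∈ Finset.Icc 1 k)
    (hw : 0 < twistedWeight β B x c a g m l) : l / g ∈ lagSet k g β B := by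
  by_cases hact : l ∈ activeLags k β B
  · obtain ⟨d, hd, rfl⟩ := exists_mem_lagSet hlag hact
    rwa [Nat.mul_div_cancel_left d hg]
  · obtain ⟨hβ, hB⟩ := hx.eq_zero_of_not_mem_activeLags hl hact
    simp [twistedWeight, hβ, hB] at hw

lemma twistedSeq_le (hx : IsPosSolution k α A β B x) (hc : c * ∑ j ∈ Finset.Icc 1 k, B j = α)
    (hg : 0 < g) (hlag : ∀ l ∈ Finset.Icc 1 k, IsParityLag β B g l) :
    ∀ᶠ m in atTop, ∀ M, (∀ d ∈ lagSet k g β B, twistedSeq x c a g (m - d) ≤ M) →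
      twistedSeq x c a g m ≤ M := by
  filter_upwards [eventually_one_le_add_mul hg a] with m hm M hM
  rw [hx.twistedSeq_eq_mean hc hg hlag hm]
  refine sum_mul_div_sum_le (fun l _ => hx.twistedWeight_nonneg (hx.c_pos hc) m l)
    (hx.sum_twistedWeight_pos (hx.c_pos hc) m) fun l hl hw =>
      hM _ (hx.div_mem_lagSet_of_twistedWeight_pos hg hlag hl hw)

lemma le_twistedSeq (hx : IsPosSolution k α A β B x) (hc : c * ∑ j ∈ Finset.Icc 1 k, B j = α)
    (hg : 0 < g) (hlag : ∀ l ∈ Finset.Icc 1 k, IsParityLag β B g l) :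
    ∀ᶠ m in atTop, ∀ M, (∀ d ∈ lagSet k g β B, M ≤ twistedSeq x c a g (m - d)) →
      M ≤ twistedSeq x c a g m := by
  filter_upwards [eventually_one_le_add_mul hg a] with m hm M hM
  rw [hx.twistedSeq_eq_mean hc hg hlag hm]
  refine le_sum_mul_div_sum (fun l _ => hx.twistedWeight_nonneg (hx.c_pos hc) m l)
    (hx.sum_twistedWeight_pos (hx.c_pos hc) m) fun l hl hw =>
      hM _ (hx.div_mem_lagSet_of_twistedWeight_pos hg hlag hl hw)

/-- The bounds also contain `1` and `c`, since every weight is `β l * s + B l * t` with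
`s, t ∈ {1, c, x (a + g * m - l)}`. -/
lemma exists_x_bounds (hx : IsPosSolution k α A β B x) (hc : c * ∑ j ∈ Finset.Icc 1 k, B j = α)
    (hg : 0 < g) (hlag : ∀ l ∈ Finset.Icc 1 k, IsParityLag β B g l) :
    ∃ p P N, 0 < p ∧ 1 ∈ Set.Icc p P ∧ c ∈ Set.Icc p P ∧ ∀ m ≥ N, x (a + g * m) ∈ Set.Icc p P := by
  obtain ⟨N, hN⟩ := eventually_atTop.1 (eventually_windowMin_le_and_le_windowMax
    (lagSet_subset hg) (hx.le_twistedSeq hc hg hlag (a := a)) (hx.twistedSeq_le hc hg hlag))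
  set lo := windowMin (twistedSeq x c a g) k (N - 1)
  set hi := windowMax (twistedSeq x c a g) k (N - 1)
  have hlo : 0 < lo := (Finset.lt_inf'_iff _).2 fun r _ => hx.twistedSeq_pos (hx.c_pos hc) _
  have hhi : 0 < hi := hlo.trans_le (windowMin_le_windowMax _)
  have hc0 := hx.c_pos hc
  refine ⟨min (min 1 c) (min lo (c / hi)), max (max 1 c) (max hi (c / lo)), N,
    by positivity, ⟨min_le_of_left_le (min_le_left _ _), le_max_of_le_left (le_max_left _ _)⟩,
    ⟨min_le_of_left_le (min_le_right _ _), le_max_of_le_left (le_max_right _ _)⟩, fun m hm => ?_⟩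
  have := hx.x_mem_Icc_of_twistedSeq_mem hlo (mem_Icc_windowMin_windowMax (fun n hn => (hN n hn).1)
    (fun n hn => (hN n hn).2) hm)
  exact ⟨min_le_of_right_le this.1, le_max_of_le_right this.2⟩

lemma exists_twistedWeight_bounds (hx : IsPosSolution k α A β B x)
    (hc : c * ∑ j ∈ Finset.Icc 1 k, B j = α) (hg : 0 < g)
    (hlag : ∀ l ∈ Finset.Icc 1 k, IsParityLag β B g l) :
    ∃ p P, 0 < p ∧ 0 < P ∧ ∀ᶠ m in atTop, ∀ l ∈ Finset.Icc 1 k,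
      p * (β l + B l) ≤ twistedWeight β B x c a g m l ∧
        twistedWeight β B x c a g m l ≤ P * (β l + B l) := by
  obtain ⟨p, P, N, hp, h1, hcI, hxI⟩ := hx.exists_x_bounds hc hg hlag (a := a)
  refine ⟨p, P, hp, zero_lt_one.trans_le h1.2, ?_⟩
  filter_upwards [eventually_ge_atTop (N + k)] with m hm l hl
  by_cases hact : l ∈ activeLags k β B
  · obtain ⟨d, hd, rfl⟩ := exists_mem_lagSet hlag hact
    have hxl : x (a + g * m - (g * d : ℕ)) ∈ Set.Icc p P := by
      have := hxI (m - d) (by have := (lagSet_subset hg hd).2; omega)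
      rwa [show a + g * (m - d) = a + g * m - (g * d : ℕ) by push_cast; ring] at this
    unfold twistedWeight
    split_ifs
    · simpa using mul_add_mul_mem_Icc (hx.β_nonneg _) (hx.B_nonneg _) h1 hxl
    · exact mul_add_mul_mem_Icc (hx.β_nonneg _) (hx.B_nonneg _) hxl hcI
  · obtain ⟨hβ, hB⟩ := hx.eq_zero_of_not_mem_activeLags hl hact
    simp [twistedWeight, hβ, hB]

lemma exists_mul_sub_le_twistedSeq_sub (hx : IsPosSolution k α A β B x)
    (hc : c * ∑ j ∈ Finset.Icc 1 k, B j = α) (hg : 0 < g)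
    (hlag : ∀ l ∈ Finset.Icc 1 k, IsParityLag β B g l) :
    ∀ d ∈ lagSet k g β B, ∃ θ > 0, ∀ᶠ m in atTop, ∀ M,
      (∀ e ∈ lagSet k g β B, M ≤ twistedSeq x c a g (m - e)) →
        θ * (twistedSeq x c a g (m - d) - M) ≤ twistedSeq x c a g m - M := by
  intro d hd
  obtain ⟨hgd, hact⟩ := Finset.mem_filter.1 (show g * d ∈ activeLags k β B from hd)
  obtain ⟨p, P, hp, hP, hw⟩ := hx.exists_twistedWeight_bounds hc hg hlag (a := a)
  have hb : ∀ l ∈ Finset.Icc 1 k, 0 ≤ β l + B l := fun l _ =>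
    add_nonneg (hx.β_nonneg l) (hx.B_nonneg l)
  have hbs : 0 < ∑ l ∈ Finset.Icc 1 k, (β l + B l) := by
    rw [Finset.sum_add_distrib]
    exact add_pos_of_nonneg_of_pos (Finset.sum_nonneg fun i _ => hx.β_nonneg i) hx.sum_B_pos
  have hbd : 0 < β (g * d) + B (g * d) := by
    rcases hact with h | h
    · exact add_pos_of_pos_of_nonneg h (hx.B_nonneg _)
    · exact add_pos_of_nonneg_of_pos (hx.β_nonneg _) h
  refine ⟨p / P * ((β (g * d) + B (g * d)) / ∑ l ∈ Finset.Icc 1 k, (β l + B l)), by positivity, ?_⟩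
  filter_upwards [eventually_one_le_add_mul hg a, hw] with m hm hwm M hM
  have key := mul_sub_le_sum_mul_div_sum_sub
    (fun l _ => hx.twistedWeight_nonneg (a := a) (hx.c_pos hc) m l)
    (hx.sum_twistedWeight_pos (hx.c_pos hc) m)
    (fun l hl hwl => hM _ (hx.div_mem_lagSet_of_twistedWeight_pos hg hlag hl hwl)) hgd
  rw [Nat.mul_div_cancel_left d hg, ← hx.twistedSeq_eq_mean hc hg hlag hm] at key
  exact (mul_le_mul_of_nonneg_right (mul_div_sum_le_div_sum hp hb hbs hwm hgd)
    (sub_nonneg.2 (hM d hd))).trans key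

end IsPosSolution

theorem converges_to_periodic_two_gcd_general (k : ℕ) (α A : ℝ) (β B : ℕ → ℝ)
    (hα : 0 < α) (hβ : ∀ i, 0 ≤ β i) (hB : ∀ j, 0 ≤ B j)
    (hBsum : 0 < ∑ j ∈ Finset.Icc 1 k, B j)
    (hAβ : A = ∑ i ∈ Finset.Icc 1 k, β i)
    (g : ℕ)
    (hg : g = ((Finset.Icc 1 k).filter (fun i => 0 < β i ∨ 0 < B i)).gcd id)
    (hdivβ : ∀ i ∈ (Finset.Icc 1 k).filter (fun i => 0 < β i), 2 * g ∣ i)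
    (hdivB : ∀ j ∈ (Finset.Icc 1 k).filter (fun j => 0 < B j), 2 * g ∣ j + g)
    (x : ℤ → ℝ) (hpos : ∀ n : ℤ, 0 < x n)
    (hrec : ∀ n : ℤ, 1 ≤ n → x n =
      (α + ∑ i ∈ Finset.Icc 1 k, β i * x (n - (i : ℤ))) /
      (A + ∑ j ∈ Finset.Icc 1 k, B j * x (n - (j : ℤ)))) :
    ∀ a : ℤ, ∃ L : ℝ,
      Tendsto (fun m : ℕ => x (2 * (g : ℤ) * (m : ℤ) + a)) atTop (𝓝 L) := by
  intro a
  have hx : IsPosSolution k α A β B x := ⟨hα, hβ, hB, hBsum, hAβ, hpos, hrec⟩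
  have hc : α / (∑ j ∈ Finset.Icc 1 k, B j) * ∑ j ∈ Finset.Icc 1 k, B j = α :=
    div_mul_cancel₀ α hBsum.ne'
  have hg0 : 0 < g := hg ▸ hx.gcd_activeLags_pos
  have hlag : ∀ l ∈ Finset.Icc 1 k, IsParityLag β B g l := fun l hl =>
    isParityLag_of_dvd (hβ l) (hB l) (Finset.mem_Icc.1 hl).1
      (fun h => hdivβ l (Finset.mem_filter.2 ⟨hl, h⟩))
      (fun h => hdivB l (Finset.mem_filter.2 ⟨hl, h⟩))
  obtain ⟨L, hL⟩ := exists_tendsto_of_lag_mean (lagSet_subset hg0) (setGcd_lagSet hg hg0 hlag)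
    (hx.le_twistedSeq hc hg0 hlag) (hx.twistedSeq_le hc hg0 hlag)
    (hx.exists_mul_sub_le_twistedSeq_sub hc hg0 hlag (a := a))
  refine ⟨L, (hL.comp (tendsto_natCast_atTop_atTop.const_mul_atTop' two_pos)).congr fun m => ?_⟩
  simp only [Function.comp_apply, twistedSeq, even_two_mul, if_true]
  congr 1
  ring

/-- Every positive solution of `xₙ = (α + ∑ βᵢ x_{n-i})/(A + ∑ Bⱼ x_{n-j})` with
`α > 0`, `∑ Bⱼ > 0`, `A = ∑ βᵢ`, `2g ∣ i` for `i ∈ I_β`, `2g ∣ j + g` for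
`j ∈ I_B` (`g = gcd (I_β ∪ I_B)`) converges to a periodic solution of period `2g`:
each subsequence `(x_{2gm+a})_m` converges. -/
theorem converges_to_periodic_two_gcd (k : ℕ) (hk : 1 ≤ k) (α A : ℝ) (β B : ℕ → ℝ)
    (hα : 0 < α) (hβ : ∀ i, 0 ≤ β i) (hB : ∀ j, 0 ≤ B j)
    (hBsum : 0 < ∑ j ∈ Finset.Icc 1 k, B j)
    (hAβ : A = ∑ i ∈ Finset.Icc 1 k, β i)
    (g : ℕ)
    (hg : g = ((Finset.Icc 1 k).filter (fun i => 0 < β i ∨ 0 < B i)).gcd id)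
    (hdivβ : ∀ i ∈ (Finset.Icc 1 k).filter (fun i => 0 < β i), 2 * g ∣ i)
    (hdivB : ∀ j ∈ (Finset.Icc 1 k).filter (fun j => 0 < B j), 2 * g ∣ j + g)
    (x : ℤ → ℝ) (hpos : ∀ n : ℤ, 0 < x n)
    (hrec : ∀ n : ℤ, 1 ≤ n → x n =
      (α + ∑ i ∈ Finset.Icc 1 k, β i * x (n - (i : ℤ))) /
      (A + ∑ j ∈ Finset.Icc 1 k, B j * x (n - (j : ℤ)))) :
    ∀ a : ℤ, ∃ L : ℝ,
      Tendsto (fun m : ℕ => x (2 * (g : ℤ) * (m : ℤ) + a)) atTop (𝓝 L) :=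
  converges_to_periodic_two_gcd_general k α A β B hα hβ hB hBsum hAβ g hg hdivβ hdivB x hpos hrec
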